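/- Let F_t be a bounded one-parameter family on ℝ^d. Then there is a closed ball B ⊆ ℝ^d such that F_t(B) ⊆ B for all t ∈ [0, t_0] (where F_t(B) = ⋃_{i=1}^N f_{(i,t)}(B) is the Hutchinson operator applied to B). Consequently, the attractor A_t is contained in B for all t ∈ [0, t_0). -/

import Mathlib

open Metric Filter Set
open scoped RealInnerProductSpace

noncomputable section

/-- The Hutchinson operator associated with a family of maps. -/
def hutch {ι E : Type*} (f : ι → E → E) (K : Set E) : Set E := ⋃ i, f i '' K

/-- `A` is the attractor of the IFS `f`: `A` is a nonempty compact set such that the iterates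
of the Hutchinson operator applied to any nonempty compact set converge to `A` in the
Hausdorff metric. -/
def IsAttractor {ι E : Type*} [MetricSpace E] (f : ι → E → E) (A : Set E) : Prop :=
  A.Nonempty ∧ IsCompact A ∧
    ∀ K : Set E, K.Nonempty → IsCompact K →
      Tendsto (fun n : ℕ => hausdorffDist ((hutch f)^[n] K) A) atTop (nhds 0)

/-- The joint spectral radius of a finite family of continuous linear maps. -/
def jsr {E : Type*} [NormedAddCommGroup E] [NormedSpace ℝ E] {N : ℕ}
    (L : Fin N → E →L[ℝ] E) : ℝ :=
  limsup (fun k : ℕ =>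
    (⨆ σ : Fin k → Fin N, ‖(List.ofFn fun j : Fin k => L (σ j)).prod‖) ^ ((1 : ℝ) / (k : ℝ)))
    atTop

/-- The one-parameter affine family `f_{(i,t)}(x) = t • f_i(x) + q_i` where
`f_i(x) = L_i x + a_i`. -/
def fam {E : Type*} [NormedAddCommGroup E] [NormedSpace ℝ E] {N : ℕ}
    (L : Fin N → E →L[ℝ] E) (a q : Fin N → E) (t : ℝ) (i : Fin N) (x : E) : E :=
  t • (L i x + a i) + q i

/-- The family is linear: every `f_{(i,t)}`, `t ∈ [0, t₀)`, is conjugate to a linear map by a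
single invertible affine map `h` independent of `i` and `t`. -/
def IsLinearFamily {E : Type*} [NormedAddCommGroup E] [NormedSpace ℝ E] {N : ℕ}
    (L : Fin N → E →L[ℝ] E) (a q : Fin N → E) : Prop :=
  ∃ h : E ≃ᵃ[ℝ] E, ∀ i : Fin N, ∀ t : ℝ, 0 ≤ t → t < 1 / jsr L →
    ∃ M : E →ₗ[ℝ] E, ∀ x, fam L a q t i x = h.symm (M (h x))

/-- The family is quasi-linear: for each `t ∈ [0, t₀)` there is an invertible affine map `h_t`,
independent of `i`, conjugating every `f_{(i,t)}` to a linear map. -/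
def IsQuasiLinearFamily {E : Type*} [NormedAddCommGroup E] [NormedSpace ℝ E] {N : ℕ}
    (L : Fin N → E →L[ℝ] E) (a q : Fin N → E) : Prop :=
  ∀ t : ℝ, 0 ≤ t → t < 1 / jsr L → ∃ h : E ≃ᵃ[ℝ] E, ∀ i : Fin N,
    ∃ M : E →ₗ[ℝ] E, ∀ x, fam L a q t i x = h.symm (M (h x))

/-- The family is semi-linear: for each `i` there is an invertible affine map `h_i`,
independent of `t`, conjugating `f_{(i,t)}` to a linear map for all `t ∈ [0, t₀)`. -/
def IsSemiLinearFamily {E : Type*} [NormedAddCommGroup E] [NormedSpace ℝ E] {N : ℕ}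
    (L : Fin N → E →L[ℝ] E) (a q : Fin N → E) : Prop :=
  ∀ i : Fin N, ∃ h : E ≃ᵃ[ℝ] E, ∀ t : ℝ, 0 ≤ t → t < 1 / jsr L →
    ∃ M : E →ₗ[ℝ] E, ∀ x, fam L a q t i x = h.symm (M (h x))

/-- The hyperplane `{x | φ x = c}` (with `φ` a nonzero linear functional) separates `S`:
it misses `S` and `S` meets both open half-spaces. -/
def SeparatesHyp {E : Type*} [AddCommGroup E] [Module ℝ E]
    (φ : E →ₗ[ℝ] ℝ) (c : ℝ) (S : Set E) : Prop :=
  φ ≠ 0 ∧ (∀ x ∈ S, φ x ≠ c) ∧ (∃ x ∈ S, φ x < c) ∧ (∃ x ∈ S, c < φ x)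

/-- A set is strongly disconnected if some hyperplane separates it. -/
def StronglyDisconnected {E : Type*} [AddCommGroup E] [Module ℝ E] (S : Set E) : Prop :=
  ∃ (φ : E →ₗ[ℝ] ℝ) (c : ℝ), SeparatesHyp φ c S

/-- A set is weakly connected if no hyperplane separates it. -/
def WeaklyConnected {E : Type*} [AddCommGroup E] [Module ℝ E] (S : Set E) : Prop :=
  ¬ StronglyDisconnected S

/-- A weak component of a compact set `S` is a maximal weakly connected compact subset of `S`. -/
def IsWeakComponent {E : Type*} [NormedAddCommGroup E] [NormedSpace ℝ E]
    (S C : Set E) : Prop :=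
  C.Nonempty ∧ C ⊆ S ∧ IsCompact C ∧ WeaklyConnected C ∧
    ∀ C' : Set E, C' ⊆ S → IsCompact C' → WeaklyConnected C' → C ⊆ C' → C' = C

/-- A (nondegenerate right circular) cone with apex `x`, axis direction `v`, radius `r` and
half-angle `θ`. -/
def coneSet {E : Type*} [NormedAddCommGroup E] [InnerProductSpace ℝ E]
    (x v : E) (r θ : ℝ) : Set E :=
  {y | ‖y - x‖ ≤ r ∧ ‖y - x‖ * Real.cos θ ≤ ⟪y - x, v⟫}

/-- A boundary point `x` of `K` is a cusp of `K` if no cone with apex `x` is contained in `K`. -/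
def IsConeCusp {E : Type*} [NormedAddCommGroup E] [InnerProductSpace ℝ E]
    (K : Set E) (x : E) : Prop :=
  x ∈ frontier K ∧ ∀ (v : E) (r θ : ℝ), ‖v‖ = 1 → 0 < r → 0 < θ → θ < Real.pi / 2 →
    ¬ coneSet x v r θ ⊆ K

/-- The one-parameter family is tame: whenever the attractor `A_t` has nonempty interior,
some fixed point of a map of `F_t` is not a cusp of `A_t`. -/
def TameFamily {E : Type*} [NormedAddCommGroup E] [InnerProductSpace ℝ E] {N : ℕ}
    (L : Fin N → E →L[ℝ] E) (a q : Fin N → E) : Prop :=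
  ∀ t : ℝ, 0 ≤ t → t < 1 / jsr L → ∀ A : Set E, IsAttractor (fam L a q t) A →
    (interior A).Nonempty → ∃ (i : Fin N) (x : E), fam L a q t i x = x ∧ ¬ IsConeCusp A x

end

/-!
Semi-linearity makes `q_i` the fixed point of every `f_{(i,t)}`, so `f_{(i,t)}` scales distances
to `q_i` by `t r_i ≤ r_i / r_î ≤ 1` for `t ≤ t₀ ≤ 1 / r_î`. A ball of radius `R` about
`q_î` is then mapped into itself by `f_{(î,t)}`, and by `f_{(i,t)}`, `i ≠ î`, as soon as
`(1 + r_i / r_î) |q_i - q_î| ≤ (1 - r_i / r_î) R`, which holds for large `R` because the ratio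
`r_î` is strictly maximal. The iterates of the Hutchinson operator on an invariant ball stay in the
ball and converge to the attractor, so the attractor lies in the ball too.
-/

section Hutchinson

variable {ι E : Type*} {f : ι → E → E}

lemma hutch_mono : Monotone (hutch f) :=
  fun _ _ h => iUnion_mono fun _ => image_mono h

lemma hutch_subset_iff {K K' : Set E} : hutch f K ⊆ K' ↔ ∀ i, MapsTo (f i) K K' := by
  simp only [hutch, iUnion_subset_iff, mapsTo_iff_image_subset]

lemma Set.Nonempty.hutch [Nonempty ι] {K : Set E} (hK : K.Nonempty) : (hutch f K).Nonempty :=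
  nonempty_iUnion.2 ⟨Classical.arbitrary ι, hK.image _⟩

lemma iterate_hutch_nonempty [Nonempty ι] {K : Set E} (hK : K.Nonempty) (n : ℕ) :
    ((hutch f)^[n] K).Nonempty := by
  induction n with
  | zero => exact hK
  | succ n ih => rw [Function.iterate_succ_apply']; exact ih.hutch

lemma iterate_hutch_subset {B : Set E} (hB : hutch f B ⊆ B) (n : ℕ) : (hutch f)^[n] B ⊆ B := by
  induction n with
  | zero => exact subset_rfl
  | succ n ih => rw [Function.iterate_succ_apply']; exact (hutch_mono ih).trans hB

lemma IsAttractor.subset_of_hutch_subset [MetricSpace E] [Nonempty ι] {A B : Set E}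
    (hA : IsAttractor f A) (hBc : IsCompact B) (hBne : B.Nonempty) (hB : hutch f B ⊆ B) :
    A ⊆ B := by
  obtain ⟨hAne, hAc, hconv⟩ := hA
  intro x hx
  have hle : ∀ n, infDist x B ≤ hausdorffDist ((hutch f)^[n] B) A := fun n => calc
    infDist x B ≤ infDist x ((hutch f)^[n] B) :=
      infDist_le_infDist_of_subset (iterate_hutch_subset hB n) (iterate_hutch_nonempty hBne n)
    _ ≤ hausdorffDist A ((hutch f)^[n] B) :=
      infDist_le_hausdorffDist_of_mem hx <| hausdorffEDist_ne_top_of_nonempty_of_bounded hAne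
        (iterate_hutch_nonempty hBne n) hAc.isBounded
        (hBc.isBounded.subset (iterate_hutch_subset hB n))
    _ = hausdorffDist ((hutch f)^[n] B) A := hausdorffDist_comm
  have hzero : infDist x B = 0 :=
    le_antisymm (ge_of_tendsto' (hconv B hBne hBc) hle) infDist_nonneg
  exact (hBc.isClosed.mem_iff_infDist_zero hBne).2 hzero

end Hutchinson

lemma mapsTo_closedBall_of_dist_le_mul {X : Type*} [PseudoMetricSpace X] {g : X → X}
    {p c : X} {s ρ R : ℝ} (hs : 0 ≤ s) (hsρ : s ≤ ρ)
    (hg : ∀ x, dist (g x) p ≤ s * dist x p) (hpc : (1 + ρ) * dist p c ≤ (1 - ρ) * R) :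
    MapsTo g (closedBall c R) (closedBall c R) := by
  intro x hx
  rw [mem_closedBall] at hx ⊢
  calc dist (g x) c ≤ dist (g x) p + dist p c := dist_triangle _ _ _
    _ ≤ s * (dist x c + dist p c) + dist p c := by
        gcongr
        exact (hg x).trans (mul_le_mul_of_nonneg_left (dist_triangle_right x p c) hs)
    _ = s * dist x c + (1 + s) * dist p c := by ring
    _ ≤ ρ * R + (1 + ρ) * dist p c := by gcongr; linarith
    _ ≤ R := by linarith

lemma exists_nonneg_forall_one_add_mul_le_one_sub_mul {ι : Type*} [Finite ι] {D ρ : ι → ℝ}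
    (hρ : ∀ i, ρ i ≤ 1) (hD : ∀ i, D i ≠ 0 → ρ i < 1) :
    ∃ R, 0 ≤ R ∧ ∀ i, (1 + ρ i) * D i ≤ (1 - ρ i) * R := by
  have hev : ∀ i, ∀ᶠ R in atTop, (1 + ρ i) * D i ≤ (1 - ρ i) * R := by
    intro i
    obtain h | h := eq_or_ne (D i) 0
    · filter_upwards [eventually_ge_atTop 0] with R hR
      rw [h, mul_zero]
      exact mul_nonneg (sub_nonneg.2 (hρ i)) hR
    · exact (tendsto_id.const_mul_atTop (sub_pos.2 (hD i h))).eventually_ge_atTop _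
  exact ((eventually_ge_atTop 0).and (eventually_all.2 hev)).exists

section JointSpectralRadius

variable {E : Type*} [NormedAddCommGroup E] [NormedSpace ℝ E] {N : ℕ}

lemma jsr_eq_zero_of_subsingleton [Subsingleton E] (L : Fin N → E →L[ℝ] E) : jsr L = 0 := by
  have hev : ∀ᶠ k : ℕ in atTop,
      (⨆ σ : Fin k → Fin N, ‖(List.ofFn fun j : Fin k => L (σ j)).prod‖) ^ ((1 : ℝ) / k) = 0 := by
    filter_upwards [eventually_ne_atTop 0] with k hk
    simp only [Subsingleton.elim _ (0 : E →L[ℝ] E), norm_zero, Real.iSup_const_zero]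
    exact Real.zero_rpow (one_div_ne_zero (Nat.cast_ne_zero.2 hk))
  rw [jsr, limsup_congr hev, limsup_const]

lemma le_jsr_of_norm_map_eq {L : Fin N → E →L[ℝ] E} (hρ : 0 < jsr L) (i : Fin N) {r : ℝ}
    (hr : 0 ≤ r) (hsim : ∀ x, ‖L i x‖ = r * ‖x‖) : r ≤ jsr L := by
  obtain _ | _ := subsingleton_or_nontrivial E
  · exact absurd (jsr_eq_zero_of_subsingleton L) hρ.ne'
  have hbdd : IsBoundedUnder (· ≤ ·) atTop fun k : ℕ =>
      (⨆ σ : Fin k → Fin N, ‖(List.ofFn fun j : Fin k => L (σ j)).prod‖) ^ ((1 : ℝ) / k) := by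
    -- otherwise the limsup would take the junk value `0`
    by_contra h
    exact hρ.ne' (Real.limsup_of_not_isBoundedUnder h)
  refine le_limsup_of_frequently_le (Eventually.frequently ?_) hbdd
  filter_upwards [eventually_ne_atTop 0] with k hk
  have hpow : ∀ (n : ℕ) (x : E), ‖(L i ^ n) x‖ = r ^ n * ‖x‖ := by
    intro n
    induction n with
    | zero => simp
    | succ n ih =>
      intro x
      rw [pow_succ']
      change ‖L i ((L i ^ n) x)‖ = _
      rw [hsim, ih, pow_succ']
      ring
  obtain ⟨x, hx⟩ := exists_norm_eq E zero_le_one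
  have hnorm : r ^ k ≤ ‖L i ^ k‖ := by
    simpa only [hpow, hx, mul_one] using (L i ^ k).le_opNorm x
  have hsup : ‖L i ^ k‖ ≤ ⨆ σ : Fin k → Fin N, ‖(List.ofFn fun j : Fin k => L (σ j)).prod‖ := by
    refine le_of_eq_of_le ?_ (le_ciSup (finite_range _).bddAbove fun _ => i)
    rw [List.ofFn_const, List.prod_replicate]
  calc r = (r ^ k) ^ ((1 : ℝ) / k) := by rw [one_div, Real.pow_rpow_inv_natCast hr hk]
    _ ≤ _ := Real.rpow_le_rpow (by positivity) (hnorm.trans hsup) (by positivity)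

end JointSpectralRadius

section AffineFamily

variable {E : Type*} [NormedAddCommGroup E] [NormedSpace ℝ E] {N : ℕ}
  {L : Fin N → E →L[ℝ] E} {a q : Fin N → E}

lemma IsSemiLinearFamily.map_add_eq_zero (hsemi : IsSemiLinearFamily L a q) (hρ : 0 < jsr L)
    (i : Fin N) : L i (q i) + a i = 0 := by
  obtain ⟨h, hh⟩ := hsemi i
  have hfix : ∀ t, 0 ≤ t → t < 1 / jsr L → fam L a q t i (h.symm 0) = h.symm 0 := by
    intro t ht₀ ht
    obtain ⟨M, hM⟩ := hh t ht₀ ht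
    simp [hM]
  -- `f_{(i,0)}` is the constant map `q i`
  have hq : q i = h.symm 0 := by simpa [fam] using hfix 0 le_rfl (by positivity)
  have ht : 0 < 1 / jsr L / 2 := by positivity
  have hfix' := hfix _ ht.le (half_lt_self (by positivity))
  rw [← hq, fam, add_eq_right, smul_eq_zero] at hfix'
  exact hfix'.resolve_left ht.ne'

lemma dist_fam_eq_of_map_add_eq_zero {i : Fin N} (hfix : L i (q i) + a i = 0) {r t : ℝ}
    (ht : 0 ≤ t) (hsim : ∀ x, ‖L i x‖ = r * ‖x‖) (x : E) :
    dist (fam L a q t i x) (q i) = t * r * dist x (q i) := by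
  have hsub : fam L a q t i x - q i = t • L i (x - q i) := by
    rw [fam, map_sub]
    linear_combination (norm := module) t • hfix
  rw [dist_eq_norm, hsub, norm_smul, hsim, Real.norm_of_nonneg ht, dist_eq_norm, mul_assoc]

end AffineFamily

theorem stmt18_general {d N : ℕ}
    (L : Fin N → EuclideanSpace ℝ (Fin d) →L[ℝ] EuclideanSpace ℝ (Fin d))
    (r : Fin N → ℝ) (hr : ∀ i, 0 < r i)
    (hsim : ∀ (i : Fin N) (x : EuclideanSpace ℝ (Fin d)), ‖L i x‖ = r i * ‖x‖)
    (a q : Fin N → EuclideanSpace ℝ (Fin d))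
    (hρ : 0 < jsr L)
    (hsemi : IsSemiLinearFamily L a q)
    (i₀ : Fin N) (hmax : ∀ i : Fin N, i ≠ i₀ → r i < r i₀) :
    ∃ (c : EuclideanSpace ℝ (Fin d)) (R : ℝ),
      (∀ t : ℝ, 0 ≤ t → t ≤ 1 / jsr L →
        hutch (fam L a q t) (closedBall c R) ⊆ closedBall c R) ∧
      (∀ t : ℝ, 0 ≤ t → t < 1 / jsr L →
        ∀ A : Set (EuclideanSpace ℝ (Fin d)), IsAttractor (fam L a q t) A →
          A ⊆ closedBall c R) := by
  have : Nonempty (Fin N) := ⟨i₀⟩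
  have hratio : ∀ i, r i / r i₀ ≤ 1 := fun i =>
    (div_le_one (hr i₀)).2 <| (eq_or_ne i i₀).elim (fun h => h ▸ le_rfl) fun h => (hmax i h).le
  obtain ⟨R, hR0, hR⟩ := exists_nonneg_forall_one_add_mul_le_one_sub_mul hratio
    (D := fun i => dist (q i) (q i₀)) fun i hi =>
      (div_lt_one (hr i₀)).2 (hmax i fun h => hi (by rw [h, dist_self]))
  have hjsr : r i₀ ≤ jsr L := le_jsr_of_norm_map_eq hρ i₀ (hr i₀).le (hsim i₀)
  have hinv : ∀ t : ℝ, 0 ≤ t → t ≤ 1 / jsr L →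
      hutch (fam L a q t) (closedBall (q i₀) R) ⊆ closedBall (q i₀) R := by
    intro t ht₀ ht
    have ht' : t ≤ 1 / r i₀ := ht.trans (one_div_le_one_div_of_le (hr i₀) hjsr)
    refine hutch_subset_iff.2 fun i => mapsTo_closedBall_of_dist_le_mul
      (mul_nonneg ht₀ (hr i).le) ?_ (fun x => ?_) (hR i)
    · exact (mul_le_mul_of_nonneg_right ht' (hr i).le).trans_eq (one_div_mul_eq_div _ _)
    · exact (dist_fam_eq_of_map_add_eq_zero (hsemi.map_add_eq_zero hρ i) ht₀ (hsim i) x).le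
  exact ⟨q i₀, R, hinv, fun t ht₀ ht A hA => hA.subset_of_hutch_subset (isCompact_closedBall _ _)
    (nonempty_closedBall.2 hR0) (hinv t ht₀ ht.le)⟩

/-- For a bounded one-parameter family on `ℝ^d` (a semi-linear similarity
family with a unique index of strictly maximal scaling ratio) there is a closed ball `B` with
`F_t(B) ⊆ B` for all `t ∈ [0, t₀]`; consequently the attractor `A_t` is contained in `B` for
all `t ∈ [0, t₀)`. -/
theorem stmt18 {d N : ℕ} (hN : 2 ≤ N)
    (L : Fin N → EuclideanSpace ℝ (Fin d) →L[ℝ] EuclideanSpace ℝ (Fin d))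
    (hL : ∀ i, Function.Bijective (L i))
    (r : Fin N → ℝ) (hr : ∀ i, 0 < r i)
    (hsim : ∀ (i : Fin N) (x : EuclideanSpace ℝ (Fin d)), ‖L i x‖ = r i * ‖x‖)
    (a q : Fin N → EuclideanSpace ℝ (Fin d))
    (hρ : 0 < jsr L)
    (hsemi : IsSemiLinearFamily L a q)
    (i₀ : Fin N) (hmax : ∀ i : Fin N, i ≠ i₀ → r i < r i₀) :
    ∃ (c : EuclideanSpace ℝ (Fin d)) (R : ℝ),
      (∀ t : ℝ, 0 ≤ t → t ≤ 1 / jsr L →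
        hutch (fam L a q t) (closedBall c R) ⊆ closedBall c R) ∧
      (∀ t : ℝ, 0 ≤ t → t < 1 / jsr L →
        ∀ A : Set (EuclideanSpace ℝ (Fin d)), IsAttractor (fam L a q t) A →
          A ⊆ closedBall c R) :=
  stmt18_general L r hr hsim a q hρ hsemi i₀ hmax
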